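/- Let (G, B) be a biased graph with root v₀, and x : V → [0,1] with x_{v₀} = 0. Suppose B' = (P, C) is a v₀-balloon decomposed as two paths P₁, P₂ from v₀ to a common non-knot vertex v of C covering B'. If there exists a v₀–v path P_v with ℓ_x(P_v) < min(ℓ_x(P₁), ℓ_x(P₂)) which shares a prefix with P and departs from B' at a vertex of the attachment path P, rejoining B' only at v, then there exists a v₀-balloon B'' with w(B'') < w(B'). -/

import Mathlib

/-!
The chord path `D = Prest⁻¹ · Q₂` from the knot `t` to `v` forms a theta graph with the two
arcs `c₁`, `c₂` of the unbalanced cycle `C`, so by linearity one of the cycles `D ∪ c₁`,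
`D ∪ c₂` is unbalanced. Hanging that cycle from the departure vertex `u` by the common prefix
`Q₁` gives a balloon. Since `w(P, C) = 2 ℓ(P) + x v₀ + ℓ(C)`, its weight is smaller by
`ℓ(Prest) + ℓ(c) - ℓ(Q₂)`, where `c` is the discarded arc, and this is positive because
`Q₁ · Q₂` is shorter than `P · c`. The other shortness inequality excludes the degenerate case
where `D` and the kept arc are the same edge `tv`.
-/

open SimpleGraph

/-- The open neighbourhood `N(S)` of a vertex set. -/
def nbhd {V : Type*} (G : SimpleGraph V) (S : Set V) : Set V :=
  {v | v ∉ S ∧ ∃ u ∈ S, G.Adj u v}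

/-- Three internally vertex-disjoint paths between two distinct vertices: a theta graph. -/
def IsTheta {V : Type*} (G : SimpleGraph V) {a b : V} (p1 p2 p3 : G.Walk a b) : Prop :=
  a ≠ b ∧ p1.IsPath ∧ p2.IsPath ∧ p3.IsPath ∧
  (∀ x, x ∈ p1.support → x ∈ p2.support → x = a ∨ x = b) ∧
  (∀ x, x ∈ p1.support → x ∈ p3.support → x = a ∨ x = b) ∧
  (∀ x, x ∈ p2.support → x ∈ p3.support → x = a ∨ x = b)

/-- A class of balanced cycles (given by their edge sets) is linear if whenever two
balanced cycles form a theta graph, the third cycle of the theta is balanced. -/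
def IsLinearClass {V : Type*} (G : SimpleGraph V) (Bal : Set (Sym2 V) → Prop) : Prop :=
  ∀ (a b : V) (p1 p2 p3 : G.Walk a b), IsTheta G p1 p2 p3 →
    Bal {e | e ∈ p1.edges ∨ e ∈ p2.edges} →
    Bal {e | e ∈ p1.edges ∨ e ∈ p3.edges} →
    Bal {e | e ∈ p2.edges ∨ e ∈ p3.edges}

/-- `G[A]` is balanced: every simple cycle with all vertices in `A` is balanced. -/
def BalancedOn {V : Type*} (G : SimpleGraph V) (Bal : Set (Sym2 V) → Prop) (A : Set V) : Prop :=
  ∀ (u : V) (w : G.Walk u u), w.IsCycle → (∀ y ∈ w.support, y ∈ A) →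
    Bal {e | e ∈ w.edges}

/-- Length of a walk under the metric `ℓ_x(uv) = (x_u + x_v)/2`. -/
noncomputable def walkLen {V : Type*} {G : SimpleGraph V} (x : V → ℝ) {u v : V} (w : G.Walk u v) : ℝ :=
  (w.darts.map fun d => (x d.toProd.1 + x d.toProd.2) / 2).sum

/-- A `v₀`-balloon: an unbalanced simple cycle `C` through the knot vertex `t`,
together with a simple path `P` from `v₀` to `t` internally disjoint from `C`. -/
def IsBalloon {V : Type*} (G : SimpleGraph V) (Bal : Set (Sym2 V) → Prop)
    (v0 t : V) (P : G.Walk v0 t) (C : G.Walk t t) : Prop :=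
  P.IsPath ∧ C.IsCycle ∧ ¬ Bal {e | e ∈ C.edges} ∧
  ∀ y, y ∈ P.support → y ∈ C.support → y = t

/-- Balloon weight `w(B) = 2 w(P) + w(C)`: coefficient 2 on path vertices (knot counted
`2·(1/2)+1 = 2` overall), coefficient 1 on the other cycle vertices. -/
noncomputable def balloonWeight {V : Type*} {G : SimpleGraph V} {v0 t : V} (x : V → ℝ)
    (P : G.Walk v0 t) (C : G.Walk t t) : ℝ :=
  2 * ((P.support.map x).sum - x t / 2) + (C.support.tail.map x).sum

/-- Shortest-path distance from `v₀` under `ℓ_x`. -/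
noncomputable def zdist {V : Type*} (G : SimpleGraph V) (x : V → ℝ) (v0 v : V) : ℝ :=
  sInf {r : ℝ | ∃ p : G.Walk v0 v, walkLen x p = r}

/-- Feasibility for the local balloon-covering LP. -/
def LPfeasible {V : Type*} (G : SimpleGraph V) (Bal : Set (Sym2 V) → Prop)
    (v0 : V) (x : V → ℝ) : Prop :=
  (∀ v, 0 ≤ x v) ∧ x v0 = 0 ∧
  ∀ (t : V) (P : G.Walk v0 t) (C : G.Walk t t),
    IsBalloon G Bal v0 t P C → 1 ≤ balloonWeight x P C

namespace SimpleGraph.Walk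

variable {V : Type*} {G : SimpleGraph V} {u v w y : V}

theorem IsPath.start_notMem_tail_support {p : G.Walk u v} (hp : p.IsPath) :
    u ∉ p.support.tail := by
  have := hp.support_nodup
  rw [← cons_tail_support] at this
  exact (List.nodup_cons.mp this).1

theorem IsPath.append {p : G.Walk u v} {q : G.Walk v w} (hp : p.IsPath) (hq : q.IsPath)
    (h : ∀ y ∈ p.support, y ∈ q.support → y = v) : (p.append q).IsPath := by
  refine IsPath.mk' ?_
  rw [support_append, List.nodup_append]
  refine ⟨hp.support_nodup, hq.support_nodup.sublist (List.tail_sublist _), ?_⟩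
  rintro y hyp _ hyq rfl
  exact hq.start_notMem_tail_support (h y hyp (List.mem_of_mem_tail hyq) ▸ hyq)

theorem IsPath.eq_of_mem_support_append {p : G.Walk u v} {q : G.Walk v w}
    (hpq : (p.append q).IsPath) (hyp : y ∈ p.support) (hyq : y ∈ q.support) : y = v := by
  by_contra hyv
  exact hpq.ne_of_mem_support_of_append hyv hyp hyq rfl

theorem IsCycle.eq_or_eq_of_mem_support_append {p : G.Walk u v} {q : G.Walk v u}
    (hc : (p.append q).IsCycle) (hyp : y ∈ p.support) (hyq : y ∈ q.support) :
    y = u ∨ y = v := by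
  have hnd := hc.support_nodup
  rw [tail_support_append, List.nodup_append] at hnd
  rw [← cons_tail_support, List.mem_cons] at hyp hyq
  rcases hyp with rfl | hyp
  · exact .inl rfl
  rcases hyq with rfl | hyq
  · exact .inr rfl
  exact (hnd.2.2 y hyp y hyq rfl).elim

theorem IsPath.isCycle_append_reverse {p q : G.Walk u v} (hp : p.IsPath) (hq : q.IsPath)
    (hne : p ≠ q) (h : ∀ y ∈ p.support, y ∈ q.support → y = u ∨ y = v) :
    (p.append q.reverse).IsCycle := by
  refine hp.isCycle_append hq.reverse ?_ ?_
  · intro y hyp hyq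
    have hyq' : y ∈ q.support := by
      simpa using List.mem_of_mem_tail hyq
    rcases h y (List.mem_of_mem_tail hyp) hyq' with rfl | rfl
    · exact hp.start_notMem_tail_support hyp
    · exact hq.reverse.start_notMem_tail_support hyq
  · by_contra! hle
    exact hne (eq_of_length_le_one hle.1 (by simpa using hle.2))

end SimpleGraph.Walk

section Balloon

variable {V : Type*} {G : SimpleGraph V}

section walkLen

variable (x : V → ℝ)

theorem walkLen_append {u v w : V} (p : G.Walk u v) (q : G.Walk v w) :
    walkLen x (p.append q) = walkLen x p + walkLen x q := by
  simp [walkLen, Walk.darts_append]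

theorem walkLen_reverse {u v : V} (p : G.Walk u v) : walkLen x p.reverse = walkLen x p := by
  simp only [walkLen, Walk.darts_reverse, List.map_reverse, List.sum_reverse, List.map_map]
  congr 1
  refine List.map_congr_left fun d _ => ?_
  simp only [Function.comp_apply, Dart.symm_toProd, Prod.fst_swap, Prod.snd_swap]
  ring

theorem sum_map_support_eq_walkLen {u v : V} (p : G.Walk u v) :
    (p.support.map x).sum = walkLen x p + (x u + x v) / 2 := by
  induction p with
  | nil => simp [walkLen]
  | cons h q ih =>
    simp only [Walk.support_cons, List.map_cons, List.sum_cons, ih, walkLen, Walk.darts_cons]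
    ring

theorem balloonWeight_eq {v0 t : V} (P : G.Walk v0 t) (C : G.Walk t t) :
    balloonWeight x P C = 2 * walkLen x P + x v0 + walkLen x C := by
  have hP := sum_map_support_eq_walkLen x P
  have hC := sum_map_support_eq_walkLen x C
  rw [← Walk.cons_tail_support, List.map_cons, List.sum_cons] at hC
  rw [balloonWeight]
  linarith

end walkLen

variable {Bal : Set (Sym2 V) → Prop}

theorem IsLinearClass.not_bal_or_not_bal_of_chord (hlin : IsLinearClass G Bal) {a b : V}
    (hab : a ≠ b) {c₁ : G.Walk a b} {c₂ : G.Walk b a} (hC : (c₁.append c₂).IsCycle)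
    (hunb : ¬ Bal {e | e ∈ (c₁.append c₂).edges}) {D : G.Walk a b} (hD : D.IsPath)
    (hDC : ∀ y ∈ D.support, y ∈ (c₁.append c₂).support → y = a ∨ y = b) :
    ¬ Bal {e | e ∈ D.edges ∨ e ∈ c₁.edges} ∨
      ¬ Bal {e | e ∈ D.edges ∨ e ∈ c₂.reverse.edges} := by
  have hc₁ : c₁.IsPath := hC.isPath_of_append_left (Walk.not_nil_of_ne hab.symm)
  have hc₂ : c₂.IsPath := hC.isPath_of_append_right (Walk.not_nil_of_ne hab)
  have htheta : IsTheta G D c₁ c₂.reverse :=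
    ⟨hab, hD, hc₁, hc₂.reverse,
      fun y hyD hy₁ => hDC y hyD (by simp [Walk.mem_support_append_iff, hy₁]),
      fun y hyD hy₂ => hDC y hyD (by simp_all [Walk.mem_support_append_iff]),
      fun y hy₁ hy₂ => hC.eq_or_eq_of_mem_support_append hy₁ (by simpa using hy₂)⟩
  by_contra! hbal
  exact hunb (by simpa using hlin a b _ _ _ htheta hbal.1 hbal.2)

section Reattach

variable {v0 u t v : V} {Q₁ : G.Walk v0 u} {Prest : G.Walk u t} {Q₂ : G.Walk u v}
  {C : G.Walk t t}

theorem isPath_chord (hP : (Q₁.append Prest).IsPath) (hQ : (Q₁.append Q₂).IsPath)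
    (hvP : v ∉ (Q₁.append Prest).support)
    (hdep : ∀ y ∈ Q₂.support, (y ∈ (Q₁.append Prest).support ∨ y ∈ C.support) →
      y = u ∨ y = v) :
    (Prest.reverse.append Q₂).IsPath := by
  refine hP.of_append_right.reverse.append hQ.of_append_right fun y hyP hyQ => ?_
  have hyP' : y ∈ (Q₁.append Prest).support := by
    simp_all [Walk.mem_support_append_iff]
  exact (hdep y hyQ (.inl hyP')).resolve_right fun hyv => hvP (hyv ▸ hyP')

theorem chord_inter_support
    (hPC : ∀ y ∈ (Q₁.append Prest).support, y ∈ C.support → y = t)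
    (hdep : ∀ y ∈ Q₂.support, (y ∈ (Q₁.append Prest).support ∨ y ∈ C.support) →
      y = u ∨ y = v) :
    ∀ y ∈ (Prest.reverse.append Q₂).support, y ∈ C.support → y = t ∨ y = v := by
  intro y hy hyC
  rcases (Walk.mem_support_append_iff _ _).mp hy with hyP | hyQ
  · exact .inl (hPC y (by simp_all [Walk.mem_support_append_iff]) hyC)
  · rcases hdep y hyQ (.inr hyC) with rfl | rfl
    · exact .inl (hPC y (by simp [Walk.mem_support_append_iff]) hyC)
    · exact .inr rfl

theorem isBalloon_reattach {R : G.Walk t v}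
    (hP : (Q₁.append Prest).IsPath) (hQ : (Q₁.append Q₂).IsPath) (hR : R.IsPath)
    (hPC : ∀ y ∈ (Q₁.append Prest).support, y ∈ C.support → y = t)
    (hRC : ∀ y ∈ R.support, y ∈ C.support)
    (hdep : ∀ y ∈ Q₂.support, (y ∈ (Q₁.append Prest).support ∨ y ∈ C.support) →
      y = u ∨ y = v)
    (hne : Prest.append R ≠ Q₂)
    (hunb : ¬ Bal {e | e ∈ (Prest.reverse.append Q₂).edges ∨ e ∈ R.edges}) :
    IsBalloon G Bal v0 u Q₁ ((Prest.append R).append Q₂.reverse) := by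
  have hPR : ∀ y ∈ (Q₁.append Prest).support, y ∈ R.support → y = t :=
    fun y hyP hyR => hPC y hyP (hRC y hyR)
  have hPrestR : (Prest.append R).IsPath :=
    hP.of_append_right.append hR fun y hyP hyR =>
      hPR y (by simp [Walk.mem_support_append_iff, hyP]) hyR
  have hcycle : ((Prest.append R).append Q₂.reverse).IsCycle :=
    hPrestR.isCycle_append_reverse hQ.of_append_right hne fun y hy hyQ =>
      hdep y hyQ (((Walk.mem_support_append_iff _ _).mp hy).imp
        (fun hyP => by simp [Walk.mem_support_append_iff, hyP]) (hRC y))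
  refine ⟨hP.of_append_left, hcycle, fun hbal => hunb ?_, fun y hyQ₁ hy => ?_⟩
  · convert hbal using 1
    ext e
    simp only [Set.mem_ofPred_eq, Walk.edges_append, Walk.edges_reverse, List.mem_append,
      List.mem_reverse]
    tauto
  simp only [Walk.mem_support_append_iff, Walk.support_reverse, List.mem_reverse] at hy
  rcases hy with (hyP | hyR) | hyQ₂
  · exact hP.eq_of_mem_support_append hyQ₁ hyP
  · obtain rfl := hPR y (by simp [Walk.mem_support_append_iff, hyQ₁]) hyR
    exact hP.eq_of_mem_support_append hyQ₁ Prest.end_mem_support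
  · exact hQ.eq_of_mem_support_append hyQ₁ hyQ₂

end Reattach

end Balloon

theorem stmt18_general {V : Type*} (G : SimpleGraph V) (Bal : Set (Sym2 V) → Prop)
    (hlin : IsLinearClass G Bal) (v0 t : V) (x : V → ℝ)
    (P : G.Walk v0 t) (C : G.Walk t t) (hB : IsBalloon G Bal v0 t P C)
    (v : V) (hvt : v ≠ t)
    (c1 : G.Walk t v) (c2 : G.Walk v t) (hsplit : C = c1.append c2)
    (u : V) (Q1 : G.Walk v0 u) (Prest : G.Walk u t) (hpre : P = Q1.append Prest)
    (Q2 : G.Walk u v) (hPv : (Q1.append Q2).IsPath)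
    (hdep : ∀ y ∈ Q2.support, (y ∈ P.support ∨ y ∈ C.support) → y = u ∨ y = v)
    (hshort1 : walkLen x (Q1.append Q2) < walkLen x (P.append c1))
    (hshort2 : walkLen x (Q1.append Q2) < walkLen x (P.append c2.reverse)) :
    ∃ (t' : V) (P' : G.Walk v0 t') (C' : G.Walk t' t'),
      IsBalloon G Bal v0 t' P' C' ∧
      balloonWeight x P' C' < balloonWeight x P C := by
  obtain ⟨hP, hC, hunb, hPC⟩ := hB
  subst hpre hsplit
  simp only [walkLen_append, walkLen_reverse] at hshort1 hshort2
  have hvP : v ∉ (Q1.append Prest).support := fun h =>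
    hvt (hPC v h (by simp [Walk.mem_support_append_iff]))
  have hc1 : c1.IsPath := hC.isPath_of_append_left (Walk.not_nil_of_ne hvt)
  have hc2 : c2.IsPath := hC.isPath_of_append_right (Walk.not_nil_of_ne hvt.symm)
  rcases hlin.not_bal_or_not_bal_of_chord hvt.symm hC hunb (isPath_chord hP hPv hvP hdep)
    (chord_inter_support hPC hdep) with h | h
  · refine ⟨u, Q1, _, isBalloon_reattach hP hPv hc1 hPC (fun y hy => ?_) hdep
      (ne_of_apply_ne (walkLen x) ?_) h, ?_⟩
    · simp [Walk.mem_support_append_iff, hy]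
    · rw [walkLen_append]
      exact ne_of_gt (by linarith)
    · simp only [balloonWeight_eq, walkLen_append, walkLen_reverse]
      linarith
  · refine ⟨u, Q1, _, isBalloon_reattach hP hPv hc2.reverse hPC (fun y hy => ?_) hdep
      (ne_of_apply_ne (walkLen x) ?_) h, ?_⟩
    · rw [Walk.support_reverse, List.mem_reverse] at hy
      simp [Walk.mem_support_append_iff, hy]
    · rw [walkLen_append, walkLen_reverse]
      exact ne_of_gt (by linarith)
    · simp only [balloonWeight_eq, walkLen_append, walkLen_reverse]
      linarith

/-- if a strictly shorter `v₀`–`v` path departs from the balloon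
at a vertex of the attachment path and rejoins it only at `v`, then a strictly
cheaper balloon exists. -/
theorem stmt18 {V : Type*} (G : SimpleGraph V) (Bal : Set (Sym2 V) → Prop)
    (hlin : IsLinearClass G Bal) (v0 t : V) (x : V → ℝ)
    (hx0 : ∀ v, 0 ≤ x v) (hx1 : ∀ v, x v ≤ 1) (hv0 : x v0 = 0)
    (P : G.Walk v0 t) (C : G.Walk t t) (hB : IsBalloon G Bal v0 t P C)
    (v : V) (hvt : v ≠ t)
    (c1 : G.Walk t v) (c2 : G.Walk v t) (hsplit : C = c1.append c2)
    (u : V) (Q1 : G.Walk v0 u) (Prest : G.Walk u t) (hpre : P = Q1.append Prest)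
    (Q2 : G.Walk u v) (hPv : (Q1.append Q2).IsPath)
    (hdep : ∀ y ∈ Q2.support, (y ∈ P.support ∨ y ∈ C.support) → y = u ∨ y = v)
    (hshort1 : walkLen x (Q1.append Q2) < walkLen x (P.append c1))
    (hshort2 : walkLen x (Q1.append Q2) < walkLen x (P.append c2.reverse)) :
    ∃ (t' : V) (P' : G.Walk v0 t') (C' : G.Walk t' t'),
      IsBalloon G Bal v0 t' P' C' ∧
      balloonWeight x P' C' < balloonWeight x P C :=
  stmt18_general G Bal hlin v0 t x P C hB v hvt c1 c2 hsplit u Q1 Prest hpre Q2 hPv hdep hshort1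
    hshort2
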